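/- arXiv:2006.00747 — 3 statements merged into one kernel-verified Lean document; each statement's English description precedes it below -/
import Mathlib

section
/- Let F be a standard Fréchet random variable with tail index 1. Then for every δ > 1, lim_{a→∞} a · E[(1 - (a/F)^{1/δ})_+] = 1/(δ+1), where (x)_+ = max(x,0). -/
/-!
By the layer-cake formula, `a · E[(1 - (a/F)^(1/δ))₊] = a ∫₀¹ P(F > a (1-t)^(-δ)) dt`, and the
Fréchet tail turns the integrand into `a (1 - exp (-(1-t)^δ / a))`. Since `1 - e^(-x) ≤ x`, this is
dominated by `(1-t)^δ`, its pointwise limit as `a → ∞`, so dominated convergence gives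
`∫₀¹ (1-t)^δ dt = 1/(δ+1)`.
-/

open MeasureTheory ProbabilityTheory Filter
open scoped ENNReal Topology
open Real Set

lemma tendsto_mul_one_sub_exp_neg_div (c : ℝ) :
    Tendsto (fun a : ℝ => a * (1 - exp (-c / a))) atTop (𝓝 c) := by
  have hderiv : HasDerivAt (fun x : ℝ => 1 - exp (-c * x)) c 0 := by
    simpa using ((hasDerivAt_id (0 : ℝ)).const_mul (-c)).exp.const_sub 1
  refine (hderiv.tendsto_slope_zero_right.comp tendsto_inv_atTop_nhdsGT_zero).congr' ?_
  filter_upwards [eventually_ne_atTop 0] with a ha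
  simp [div_eq_mul_inv]

lemma mul_one_sub_exp_neg_div_le {a c : ℝ} (ha : 0 < a) :
    a * (1 - exp (-c / a)) ≤ c := by
  have := add_one_le_exp (-c / a)
  calc a * (1 - exp (-c / a)) ≤ a * (c / a) := by gcongr; rw [neg_div] at this ⊢; linarith
    _ = c := mul_div_cancel₀ c ha.ne'

lemma mul_one_sub_exp_neg_div_nonneg {a c : ℝ} (ha : 0 < a) (hc : 0 ≤ c) :
    0 ≤ a * (1 - exp (-c / a)) := by
  have : exp (-c / a) ≤ 1 :=
    exp_le_one_iff.mpr (div_nonpos_of_nonpos_of_nonneg (by linarith) ha.le)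
  nlinarith

lemma integral_Ioo_one_sub_rpow {δ : ℝ} (hδ : -1 < δ) :
    ∫ t in Ioo (0 : ℝ) 1, (1 - t) ^ δ = 1 / (δ + 1) := by
  rw [← integral_Ioc_eq_integral_Ioo, ← intervalIntegral.integral_of_le zero_le_one,
    intervalIntegral.integral_comp_sub_left (fun x : ℝ => x ^ δ), sub_self, sub_zero,
    integral_rpow (Or.inl hδ), one_rpow, zero_rpow (by linarith)]
  ring

lemma tendsto_integral_mul_one_sub_exp_neg_rpow {δ : ℝ} (hδ : -1 < δ) :
    Tendsto (fun a : ℝ => ∫ t in Ioo (0 : ℝ) 1, a * (1 - exp (-(1 - t) ^ δ / a))) atTop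
      (𝓝 (1 / (δ + 1))) := by
  rw [← integral_Ioo_one_sub_rpow hδ]
  have hint : IntegrableOn (fun t : ℝ => (1 - t) ^ δ) (Ioo 0 1) :=
    Integrable.of_integral_ne_zero (by
      rw [integral_Ioo_one_sub_rpow hδ]
      have : 0 < δ + 1 := by linarith
      positivity)
  refine tendsto_integral_filter_of_dominated_convergence _ (.of_forall fun a => ?_) ?_ hint ?_
  · exact Measurable.aestronglyMeasurable (by fun_prop)
  · filter_upwards [eventually_gt_atTop 0] with a ha
    filter_upwards [ae_restrict_mem measurableSet_Ioo] with t ht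
    have hpos : 0 ≤ (1 - t) ^ δ := rpow_nonneg (by linarith [ht.2]) δ
    rw [norm_of_nonneg (mul_one_sub_exp_neg_div_nonneg ha hpos)]
    exact mul_one_sub_exp_neg_div_le ha
  · exact .of_forall fun t => tendsto_mul_one_sub_exp_neg_div _

lemma lt_max_one_sub_rpow_iff {a x t δ : ℝ} (ha : 0 < a) (hx : 0 < x) (hδ : 0 < δ)
    (ht : t ∈ Ioo 0 1) : t < max (1 - (a / x) ^ (1 / δ)) 0 ↔ a / (1 - t) ^ δ < x := by
  have h1t : 0 < 1 - t := by linarith [ht.2]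
  rw [lt_max_iff, or_iff_left ht.1.not_gt, lt_sub_comm, one_div,
    rpow_inv_lt_iff_of_pos (div_pos ha hx).le h1t.le hδ, div_lt_iff₀ hx,
    div_lt_iff₀ (rpow_pos_of_pos h1t δ), mul_comm]

lemma max_one_sub_rpow_lt_one {a x δ : ℝ} (ha : 0 < a) (hx : 0 < x) :
    max (1 - (a / x) ^ (1 / δ)) 0 < 1 :=
  max_lt (by linarith [rpow_pos_of_pos (div_pos ha hx) (1 / δ)]) one_pos

section Frechet

variable {Ω : Type*} [MeasureSpace Ω] [IsProbabilityMeasure (ℙ : Measure Ω)] {F : Ω → ℝ}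

lemma measureReal_lt_of_cdf_eq_exp (hmeas : Measurable F)
    (hcdf : ∀ s : ℝ, 0 < s → (ℙ : Measure Ω) {ω | F ω ≤ s} = ENNReal.ofReal (exp (-1 / s)))
    {s : ℝ} (hs : 0 < s) : (ℙ : Measure Ω).real {ω | s < F ω} = 1 - exp (-1 / s) := by
  have hcompl : {ω | s < F ω} = {ω | F ω ≤ s}ᶜ := by ext; simp
  rw [hcompl, probReal_compl_eq_one_sub (measurableSet_le hmeas measurable_const),
    measureReal_def, hcdf s hs, ENNReal.toReal_ofReal (exp_nonneg _)]

lemma measureReal_lt_max_one_sub_rpow (hmeas : Measurable F)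
    (hcdf : ∀ s : ℝ, 0 < s → (ℙ : Measure Ω) {ω | F ω ≤ s} = ENNReal.ofReal (exp (-1 / s)))
    (hF : ∀ᵐ ω ∂(ℙ : Measure Ω), 0 < F ω) {a δ t : ℝ} (ha : 0 < a) (hδ : 0 < δ) (ht : 0 < t) :
    (ℙ : Measure Ω).real {ω | t < max (1 - (a / F ω) ^ (1 / δ)) 0} =
      (Ioo 0 1).indicator (fun t => 1 - exp (-(1 - t) ^ δ / a)) t := by
  rcases lt_or_ge t 1 with ht1 | ht1
  · have htI : t ∈ Ioo 0 1 := ⟨ht, ht1⟩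
    have hlevel : {ω | t < max (1 - (a / F ω) ^ (1 / δ)) 0} =ᵐ[ℙ]
        {ω | a / (1 - t) ^ δ < F ω} := by
      filter_upwards [hF] with ω hω
      exact propext (lt_max_one_sub_rpow_iff ha hω hδ htI)
    rw [measureReal_congr hlevel, indicator_of_mem htI,
      measureReal_lt_of_cdf_eq_exp hmeas hcdf (div_pos ha (rpow_pos_of_pos (by linarith) δ)),
      neg_div, neg_div, one_div_div]
  · rw [indicator_of_notMem (fun h => ht1.not_gt h.2), measureReal_eq_zero_iff]
    refine measure_mono_null ?_ (ae_iff.mp hF)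
    intro ω (hω : t < _) (hFω : 0 < F ω)
    exact ((max_one_sub_rpow_lt_one ha hFω).trans_le ht1).not_gt hω

lemma mul_integral_max_one_sub_rpow_eq (hmeas : Measurable F)
    (hcdf : ∀ s : ℝ, 0 < s → (ℙ : Measure Ω) {ω | F ω ≤ s} = ENNReal.ofReal (exp (-1 / s)))
    (hF : ∀ᵐ ω ∂(ℙ : Measure Ω), 0 < F ω) {a δ : ℝ} (ha : 0 < a) (hδ : 0 < δ) :
    a * ∫ ω, max (1 - (a / F ω) ^ (1 / δ)) 0 ∂(ℙ : Measure Ω) =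
      ∫ t in Ioo (0 : ℝ) 1, a * (1 - exp (-(1 - t) ^ δ / a)) := by
  have hint : Integrable (fun ω => max (1 - (a / F ω) ^ (1 / δ)) 0) ℙ := by
    refine (integrable_const (1 : ℝ)).mono' (Measurable.aestronglyMeasurable (by fun_prop)) ?_
    filter_upwards [hF] with ω hω
    rw [norm_of_nonneg (le_max_right _ _)]
    exact (max_one_sub_rpow_lt_one ha hω).le
  rw [hint.integral_eq_integral_meas_lt (.of_forall fun _ => le_max_right _ _),
    setIntegral_congr_fun measurableSet_Ioi
      fun t ht => measureReal_lt_max_one_sub_rpow hmeas hcdf hF ha hδ ht,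
    setIntegral_indicator measurableSet_Ioo,
    inter_eq_self_of_subset_right Ioo_subset_Ioi_self, integral_const_mul]

end Frechet

/-- For a standard Fréchet random variable `F` with tail index 1 and `δ > 1`,
`lim_{a→∞} a · E[(1 - (a/F)^(1/δ))₊] = 1/(δ+1)`. -/
theorem frechet_first_moment_computation {Ω : Type*} [MeasureSpace Ω]
    [IsProbabilityMeasure (ℙ : Measure Ω)]
    (F : Ω → ℝ) (hmeas : Measurable F)
    (hcdf : ∀ s : ℝ, 0 < s →
      (ℙ : Measure Ω) {ω | F ω ≤ s} = ENNReal.ofReal (Real.exp (-1 / s)))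
    (hcdf0 : ∀ s : ℝ, s ≤ 0 → (ℙ : Measure Ω) {ω | F ω ≤ s} = 0)
    (δ : ℝ) (hδ : 1 < δ) :
    Tendsto (fun a : ℝ => a * ∫ ω, max (1 - (a / F ω) ^ (1 / δ)) 0 ∂(ℙ : Measure Ω))
      atTop (𝓝 (1 / (δ + 1))) := by
  have hF : ∀ᵐ ω ∂(ℙ : Measure Ω), 0 < F ω := by
    simpa [ae_iff, not_lt] using hcdf0 0 le_rfl
  refine (tendsto_integral_mul_one_sub_exp_neg_rpow (by linarith)).congr' ?_
  filter_upwards [eventually_gt_atTop 0] with a ha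
  exact (mul_integral_max_one_sub_rpow_eq hmeas hcdf hF ha (by linarith)).symm
end

section
/- Let δ ∈ (0,1) and let (G_j)_{j≥1} be i.i.d. random variables with P(G_1 > 0) > 0 and E[|G_1|] < ∞. Then almost surely there exists a (random) index I such that both G_I > 0 and ∑_{j≥I} δ^j G_{j+1} > 0. -/
/-!
The events `A n = {∃ I > n, G I > 0 ∧ ∑ⱼ δ ^ j * G (I + 1 + j) > 0}` decrease and `A n` depends
only on `G n, G (n + 1), …`, so `⋂ n, A n` is a tail event, of probability `0` or `1` by
Kolmogorov's zero-one law. It has positive probability because `P (A n)` is bounded below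
uniformly: `P (A n) ≥ P (G 1 > 0) * P (S > 0)` for the discounted sum `S` from index `n + 2`, and
`S > 0` whenever its first `k + 1` terms exceed a level `c > 0` with `P (G 1 > c) > 0` while the
weighted absolute remainder is at most `c / δ ^ (k + 1)`. All remainders have the same finite
mean, so by Markov's inequality the latter has probability at least `1/2` once `k` is large, and
it is independent of the first `k + 1` terms.
-/

open MeasureTheory ProbabilityTheory Filter
open scoped ENNReal

theorem summable_and_tsum_le_of_tsum_ofReal_le {a : ℕ → ℝ} (ha : ∀ j, 0 ≤ a j) {r : ℝ≥0∞}
    (hr : r ≠ ∞) (h : ∑' j, ENNReal.ofReal (a j) ≤ r) : Summable a ∧ ∑' j, a j ≤ r.toReal := by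
  have hne : ∑' j, ENNReal.ofReal (a j) ≠ ∞ := ne_top_of_le_ne_top hr h
  have hreal : ∀ j, (ENNReal.ofReal (a j)).toReal = a j := fun j => ENNReal.toReal_ofReal (ha j)
  refine ⟨(ENNReal.summable_toReal hne).congr hreal, ?_⟩
  calc ∑' j, a j = (∑' j, ENNReal.ofReal (a j)).toReal := by
        rw [ENNReal.tsum_toReal_eq fun _ => ENNReal.ofReal_ne_top]
        exact tsum_congr fun j => (hreal j).symm
    _ ≤ r.toReal := ENNReal.toReal_mono hr h

theorem tsum_pow_mul_pos_of_head_of_tail {δ c R : ℝ} {g : ℕ → ℝ} {k : ℕ} (hδ : 0 ≤ δ)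
    (hc : 0 ≤ c) (hhead : ∀ j ≤ k, c < g j)
    (hsum : Summable fun j => δ ^ j * |g (j + (k + 1))|)
    (htail : ∑' j, δ ^ j * |g (j + (k + 1))| ≤ R) (hkR : δ ^ (k + 1) * R ≤ c) :
    0 < ∑' j, δ ^ j * g j := by
  have hterm : ∀ j, δ ^ (j + (k + 1)) * g (j + (k + 1))
      = δ ^ (k + 1) * (δ ^ j * g (j + (k + 1))) := fun j => by ring
  have hsum' : Summable fun j => δ ^ j * g (j + (k + 1)) :=
    hsum.of_norm_bounded fun j => by rw [Real.norm_eq_abs, abs_mul, abs_pow, abs_of_nonneg hδ]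
  have hsplit := ((summable_nat_add_iff (f := fun j => δ ^ j * g j) (k + 1)).1
    ((hsum'.mul_left (δ ^ (k + 1))).congr fun j => (hterm j).symm)).sum_add_tsum_nat_add (k + 1)
  have hhead_gt : c < ∑ j ∈ Finset.range (k + 1), δ ^ j * g j :=
    calc c < δ ^ 0 * g 0 := by simpa using hhead 0 (Nat.zero_le k)
      _ ≤ _ := Finset.single_le_sum (fun j hj => mul_nonneg (pow_nonneg hδ j)
          (hc.trans (hhead j (Nat.lt_succ_iff.1 (Finset.mem_range.1 hj))).le))
          (Finset.mem_range.2 k.succ_pos)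
  have htail_ge : -c ≤ ∑' j, δ ^ (j + (k + 1)) * g (j + (k + 1)) := by
    rw [tsum_congr hterm, tsum_mul_left]
    have : -R ≤ ∑' j, δ ^ j * g (j + (k + 1)) := by
      rw [neg_le, ← tsum_neg]
      refine (hsum'.neg.tsum_le_tsum (fun j => ?_) hsum).trans htail
      rw [← mul_neg]
      exact mul_le_mul_of_nonneg_left (neg_le_abs _) (pow_nonneg hδ j)
    nlinarith [pow_nonneg hδ (k + 1)]
  rw [← hsplit]
  linarith

theorem exists_pos_measure_lt_ne_zero {Ω : Type*} [MeasurableSpace Ω] {μ : Measure Ω}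
    {X : Ω → ℝ} (h : μ {ω | 0 < X ω} ≠ 0) : ∃ c > 0, μ {ω | c < X ω} ≠ 0 := by
  by_contra! hX
  refine h (measure_mono_null (fun ω hω => ?_) (measure_iUnion_null fun n : ℕ =>
    hX (1 / (n + 1)) Nat.one_div_pos_of_nat))
  exact Set.mem_iUnion.2 (exists_nat_one_div_lt (show 0 < X ω from hω))

theorem inv_two_le_measure_lt_of_two_mul_lintegral_le {Ω : Type*} [MeasurableSpace Ω]
    {μ : Measure Ω} [IsProbabilityMeasure μ] {f : Ω → ℝ≥0∞} (hf : Measurable f) {t : ℝ≥0∞}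
    (ht0 : t ≠ 0) (ht : t ≠ ∞) (hft : 2 * ∫⁻ ω, f ω ∂μ ≤ t) :
    2⁻¹ ≤ μ {ω | f ω < t} := by
  have hmarkov : μ {ω | t ≤ f ω} ≤ 2⁻¹ := by
    refine (meas_ge_le_lintegral_div hf.aemeasurable ht0 ht).trans ?_
    rw [ENNReal.div_le_iff ht0 ht, mul_comm, ← div_eq_mul_inv,
      ENNReal.le_div_iff_mul_le (Or.inl two_ne_zero) (Or.inl ENNReal.ofNat_ne_top), mul_comm]
    exact hft
  have hcompl : {ω | f ω < t} = {ω | t ≤ f ω}ᶜ := by ext; simp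
  rw [hcompl, prob_compl_eq_one_sub (measurableSet_le measurable_const hf)]
  calc (2 : ℝ≥0∞)⁻¹ = 1 - 2⁻¹ := ENNReal.one_sub_inv_two.symm
    _ ≤ 1 - μ {ω | t ≤ f ω} := tsub_le_tsub_left hmarkov 1

theorem measurable_iSup_comap {Ω ι β : Type*} [MeasurableSpace β] {G : ι → Ω → β}
    {p : ι → Prop} {i : ι} (hi : p i) :
    Measurable[⨆ j, ⨆ (_ : p j), MeasurableSpace.comap (G j) ‹_›] (G i) :=
  (comap_measurable (G i)).mono (le_iSup₂ (f := fun j _ => MeasurableSpace.comap (G j) _) i hi)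
    le_rfl

theorem ae_forall_mem_of_iIndep_of_antitone {Ω : Type*} {m0 : MeasurableSpace Ω}
    {μ : Measure Ω} [IsProbabilityMeasure μ] {m : ℕ → MeasurableSpace Ω} (h_le : ∀ n, m n ≤ m0)
    (h_indep : iIndep m μ) {A : ℕ → Set Ω} (hA : Antitone A)
    (hA_meas : ∀ n, MeasurableSet[⨆ i ≥ n, m i] (A n)) {ε : ℝ≥0∞} (hε : ε ≠ 0)
    (hεA : ∀ n, ε ≤ μ (A n)) : ∀ᵐ ω ∂μ, ∀ n, ω ∈ A n := by
  have hA_meas' : ∀ n, MeasurableSet (A n) := fun n => iSup₂_le (fun i _ => h_le i) _ (hA_meas n)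
  have htail : MeasurableSet[limsup m atTop] (⋂ n, A n) := by
    rw [limsup_eq_iInf_iSup_of_nat, MeasurableSpace.measurableSet_iInf]
    intro n
    rw [← hA.iInter_nat_add n]
    refine .iInter fun k => ?_
    have hle : (⨆ i ≥ k + n, m i) ≤ ⨆ i ≥ n, m i :=
      biSup_mono fun i hi => (Nat.le_add_left n k).trans hi
    exact hle _ (hA_meas (k + n))
  have hε_le : ε ≤ μ (⋂ n, A n) := ge_of_tendsto' (tendsto_measure_iInter_atTop
    (fun n => (hA_meas' n).nullMeasurableSet) hA ⟨0, measure_ne_top μ _⟩) hεA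
  have h_one : μ (⋂ n, A n) = 1 :=
    (measure_zero_or_one_of_measurableSet_limsup_atTop h_le h_indep htail).resolve_left
      fun h0 => hε (le_antisymm (h0 ▸ hε_le) zero_le)
  have h_ae : ∀ᵐ ω ∂μ, ω ∈ ⋂ n, A n := (prob_compl_eq_zero_iff (.iInter hA_meas')).2 h_one
  filter_upwards [h_ae] with ω hω using Set.mem_iInter.1 hω

section Discounted

variable {Ω : Type*} {G : ℕ → Ω → ℝ} {δ : ℝ}

noncomputable def discountedSum (δ : ℝ) (G : ℕ → Ω → ℝ) (n : ℕ) (ω : Ω) : ℝ :=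
  ∑' j, δ ^ j * G (n + j) ω

/-- Being `ℝ≥0∞`-valued it needs no summability; where it is finite, the series in
`discountedSum` is summable (otherwise that `tsum` is the junk value `0`). -/
noncomputable def discountedAbsSum (δ : ℝ) (G : ℕ → Ω → ℝ) (n : ℕ) (ω : Ω) : ℝ≥0∞ :=
  ∑' j, ENNReal.ofReal (δ ^ j * |G (n + j) ω|)

theorem measurable_discountedSum {m : MeasurableSpace Ω} {n : ℕ}
    (hG : ∀ j, Measurable[m] (G (n + j))) : Measurable[m] (discountedSum δ G n) :=
  Measurable.tsum fun j => (hG j).const_mul _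

theorem measurable_discountedAbsSum {m : MeasurableSpace Ω} {n : ℕ}
    (hG : ∀ j, Measurable[m] (G (n + j))) : Measurable[m] (discountedAbsSum δ G n) :=
  Measurable.tsum fun j => ENNReal.measurable_ofReal.comp ((hG j).abs.const_mul _)

theorem lintegral_discountedAbsSum [MeasurableSpace Ω] {μ : Measure Ω} (hδ : 0 ≤ δ)
    (hid : ∀ j, 1 ≤ j → IdentDistrib (G j) (G 1) μ μ) {n : ℕ} (hn : 1 ≤ n) :
    ∫⁻ ω, discountedAbsSum δ G n ω ∂μ = (1 - ENNReal.ofReal δ)⁻¹ * ∫⁻ ω, ‖G 1 ω‖ₑ ∂μ := by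
  have hterm : ∀ j ω, ENNReal.ofReal (δ ^ j * |G (n + j) ω|)
      = ENNReal.ofReal δ ^ j * ‖G (n + j) ω‖ₑ := fun j ω => by
    rw [ENNReal.ofReal_mul (pow_nonneg hδ j), ENNReal.ofReal_pow hδ, Real.enorm_eq_ofReal_abs]
  simp only [discountedAbsSum, hterm]
  rw [lintegral_tsum fun j => ((hid (n + j) (by omega)).aemeasurable_fst.enorm).const_mul _]
  calc ∑' j, ∫⁻ ω, ENNReal.ofReal δ ^ j * ‖G (n + j) ω‖ₑ ∂μ
      = ∑' j, ENNReal.ofReal δ ^ j * ∫⁻ ω, ‖G 1 ω‖ₑ ∂μ := tsum_congr fun j => by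
        rw [lintegral_const_mul' _ _ (ENNReal.pow_ne_top ENNReal.ofReal_ne_top)]
        exact congrArg _ ((hid (n + j) (by omega)).comp measurable_enorm).lintegral_eq
    _ = _ := by rw [ENNReal.tsum_mul_right, ENNReal.tsum_geometric]

theorem discountedSum_pos_of_lt_of_discountedAbsSum_lt {c : ℝ} {t : ℝ≥0∞} {n k : ℕ} {ω : Ω}
    (hδ : 0 ≤ δ) (hc : 0 ≤ c) (ht : t ≠ ∞) (hkt : δ ^ (k + 1) * t.toReal ≤ c)
    (hhead : ∀ j ≤ k, c < G (n + j) ω)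
    (htail : discountedAbsSum δ G (n + (k + 1)) ω < t) : 0 < discountedSum δ G n ω := by
  obtain ⟨hsum, hle⟩ := summable_and_tsum_le_of_tsum_ofReal_le
    (fun j => mul_nonneg (pow_nonneg hδ j) (abs_nonneg _)) ht htail.le
  have hidx : ∀ j, n + (k + 1) + j = n + (j + (k + 1)) := fun j => by omega
  simp only [hidx] at hsum hle
  exact tsum_pow_mul_pos_of_head_of_tail hδ hc hhead hsum hle hkt

end Discounted

section IID

variable {Ω : Type*} [MeasurableSpace Ω] {μ : Measure Ω} [IsProbabilityMeasure μ]
  {G : ℕ → Ω → ℝ} {δ : ℝ}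

theorem exists_inv_two_le_measure_discountedAbsSum_lt (hδ : δ ∈ Set.Ioo 0 1)
    (hmeas : ∀ j, Measurable (G j)) (hid : ∀ j, 1 ≤ j → IdentDistrib (G j) (G 1) μ μ)
    (hint : Integrable (G 1) μ) :
    ∃ t ≠ ∞, ∀ n ≥ 1, 2⁻¹ ≤ μ {ω | discountedAbsSum δ G n ω < t} := by
  set B := (1 - ENNReal.ofReal δ)⁻¹ * ∫⁻ ω, ‖G 1 ω‖ₑ ∂μ
  have hB : B ≠ ∞ := ENNReal.mul_ne_top
    (ENNReal.inv_ne_top.2 (tsub_pos_of_lt (ENNReal.ofReal_lt_one.2 hδ.2)).ne') hint.2.ne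
  refine ⟨2 * B + 1, by finiteness, fun n hn => ?_⟩
  refine inv_two_le_measure_lt_of_two_mul_lintegral_le
    (measurable_discountedAbsSum fun j => hmeas (n + j)) (by simp) (by finiteness) ?_
  rw [lintegral_discountedAbsSum hδ.1.le hid hn]
  exact le_self_add

theorem exists_le_measure_discountedSum_pos (hδ : δ ∈ Set.Ioo 0 1)
    (hmeas : ∀ j, Measurable (G j)) (hindep : iIndepFun G μ)
    (hid : ∀ j, 1 ≤ j → IdentDistrib (G j) (G 1) μ μ) (hint : Integrable (G 1) μ)
    (hpos : μ {ω | 0 < G 1 ω} ≠ 0) :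
    ∃ ε ≠ 0, ∀ n ≥ 1, ε ≤ μ {ω | 0 < discountedSum δ G n ω} := by
  obtain ⟨c, hc, hq⟩ := exists_pos_measure_lt_ne_zero hpos
  obtain ⟨t, ht, htail⟩ := exists_inv_two_le_measure_discountedAbsSum_lt hδ hmeas hid hint
  obtain ⟨k, hk⟩ := (((tendsto_pow_atTop_nhds_zero_of_lt_one hδ.1.le hδ.2).mul_const
    t.toReal).eventually (gt_mem_nhds (by simpa using hc))).exists_forall_of_atTop
  set q := μ {ω | c < G 1 ω}
  refine ⟨q ^ (k + 1) * 2⁻¹, by simp [hq], fun n hn => ?_⟩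
  set block := ⋂ i ∈ Finset.Ico n (n + (k + 1)), {ω | c < G i ω}
  set tail := {ω | discountedAbsSum δ G (n + (k + 1)) ω < t}
  have hsub : block ∩ tail ⊆ {ω | 0 < discountedSum δ G n ω} := fun ω ⟨hb, htl⟩ =>
    discountedSum_pos_of_lt_of_discountedAbsSum_lt hδ.1.le hc.le ht (hk (k + 1) k.le_succ).le
      (fun j hj => Set.mem_iInter₂.1 hb (n + j) (Finset.mem_Ico.2 ⟨by omega, by omega⟩)) htl
  have hblock : μ block = q ^ (k + 1) := by
    have hq_eq : ∀ i ≥ 1, μ {ω | c < G i ω} = q := fun i hi =>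
      (hid i hi).measure_mem_eq measurableSet_Ioi
    rw [hindep.meas_biInter fun i _ => measurableSet_lt measurable_const (comap_measurable (G i)),
      Finset.prod_congr rfl fun i hi => hq_eq i (hn.trans (Finset.mem_Ico.1 hi).1),
      Finset.prod_const, Nat.card_Ico, Nat.add_sub_cancel_left]
  have hsplit : μ (block ∩ tail) = μ block * μ tail := by
    refine (Indep_iff _ _ _).1 (indep_iSup_of_disjoint (fun i => (hmeas i).comap_le) hindep.iIndep
      (S := Finset.Ico n (n + (k + 1))) (T := Set.Ici (n + (k + 1))) ?_) _ _ ?_ ?_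
    · exact Set.disjoint_left.2 fun i hi hi' => by simp at hi hi'; omega
    · exact .biInter (Finset.countable_toSet _) fun i hi =>
        measurableSet_lt measurable_const (measurable_iSup_comap hi)
    · exact measurableSet_lt (measurable_discountedAbsSum fun j =>
        measurable_iSup_comap (Set.mem_Ici.2 (Nat.le_add_right _ j))) measurable_const
  calc q ^ (k + 1) * 2⁻¹ ≤ μ block * μ tail := by rw [hblock]; gcongr; exact htail _ (by omega)
    _ = μ (block ∩ tail) := hsplit.symm
    _ ≤ _ := measure_mono hsub

theorem exists_le_measure_pos_inter_discountedSum_pos (hδ : δ ∈ Set.Ioo 0 1)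
    (hmeas : ∀ j, Measurable (G j)) (hindep : iIndepFun G μ)
    (hid : ∀ j, 1 ≤ j → IdentDistrib (G j) (G 1) μ μ) (hint : Integrable (G 1) μ)
    (hpos : μ {ω | 0 < G 1 ω} ≠ 0) :
    ∃ ε ≠ 0, ∀ n ≥ 1,
      ε ≤ μ ({ω | 0 < G n ω} ∩ {ω | 0 < discountedSum δ G (n + 1) ω}) := by
  obtain ⟨ε, hε, hεS⟩ := exists_le_measure_discountedSum_pos hδ hmeas hindep hid hint hpos
  refine ⟨μ {ω | 0 < G 1 ω} * ε, mul_ne_zero hpos hε, fun n hn => ?_⟩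
  have hGn : μ {ω | 0 < G n ω} = μ {ω | 0 < G 1 ω} :=
    (hid n hn).measure_mem_eq measurableSet_Ioi
  rw [(Indep_iff _ _ _).1 (indep_iSup_of_disjoint (fun i => (hmeas i).comap_le) hindep.iIndep
      (S := {n}) (T := Set.Ici (n + 1)) (by simp)) _ _
      (measurableSet_lt measurable_const (measurable_iSup_comap rfl))
      (measurableSet_lt measurable_const (measurable_discountedSum fun j =>
        measurable_iSup_comap (Set.mem_Ici.2 (Nat.le_add_right _ j)))), hGn]
  gcongr
  exact hεS (n + 1) (by omega)

end IID

/-- For `δ ∈ (0,1)` and i.i.d. integrable `(G j)_{j ≥ 1}` with `P(G 1 > 0) > 0`,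
almost surely there exists a (random) index `I ≥ 1` such that `G I > 0` and
`∑_{j ≥ I} δ^j G (j+1) > 0`. -/
theorem exists_index_positive_tail_sum {Ω : Type*} [MeasureSpace Ω]
    [IsProbabilityMeasure (ℙ : Measure Ω)]
    (δ : ℝ) (hδ : δ ∈ Set.Ioo (0 : ℝ) 1)
    (G : ℕ → Ω → ℝ)
    (hmeas : ∀ j, Measurable (G j))
    (hindep : iIndepFun G ℙ)
    (hid : ∀ j, 1 ≤ j → IdentDistrib (G j) (G 1) ℙ ℙ)
    (hint : Integrable (G 1) (ℙ : Measure Ω))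
    (hpos : 0 < (ℙ : Measure Ω) {ω | 0 < G 1 ω}) :
    ∀ᵐ ω ∂(ℙ : Measure Ω), ∃ I : ℕ, 1 ≤ I ∧ 0 < G I ω ∧
      0 < ∑' j : ℕ, δ ^ (I + j) * G (I + j + 1) ω := by
  obtain ⟨ε, hε, hεA⟩ :=
    exists_le_measure_pos_inter_discountedSum_pos hδ hmeas hindep hid hint hpos.ne'
  set A : ℕ → Set Ω := fun n =>
    ⋃ I > n, {ω | 0 < G I ω} ∩ {ω | 0 < discountedSum δ G (I + 1) ω}
  have hA : Antitone A := fun a b hab =>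
    Set.biUnion_mono (fun I hI => hab.trans_lt hI) fun _ _ => le_rfl
  have hA_meas : ∀ n, MeasurableSet[⨆ i ≥ n, MeasurableSpace.comap (G i) inferInstance] (A n) :=
    fun n => .iUnion fun I => .iUnion fun hI =>
      (measurableSet_lt measurable_const (measurable_iSup_comap (le_of_lt hI))).inter
        (measurableSet_lt measurable_const (measurable_discountedSum fun j =>
          measurable_iSup_comap (show I + 1 + j ≥ n by omega)))
  have h_all := ae_forall_mem_of_iIndep_of_antitone (fun i => (hmeas i).comap_le)
    hindep.iIndep hA hA_meas hε fun n =>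
      (hεA (n + 1) (by omega)).trans
        (measure_mono fun ω hω => Set.mem_iUnion₂.2 ⟨n + 1, n.lt_succ_self, hω⟩)
  filter_upwards [h_all] with ω hω
  obtain ⟨I, hI, hGI, hSI⟩ := Set.mem_iUnion₂.1 (hω 0)
  refine ⟨I, hI, hGI, ?_⟩
  have hshift : ∑' j, δ ^ (I + j) * G (I + j + 1) ω = δ ^ I * discountedSum δ G (I + 1) ω := by
    rw [discountedSum, ← tsum_mul_left]
    exact tsum_congr fun j => by rw [pow_add, mul_assoc, add_right_comm]
  rw [hshift]
  exact mul_pos (pow_pos hδ.1 I) hSI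
end

section
/- Let the two walkers' scopes be intervals (on the discrete torus) with cardinalities n_L and n_R, intersection of cardinality n_∩, and union of cardinality n_∪ = n_L + n_R - n_∩. If each walker jumps to the position of the maximum of i.i.d. atomless fitnesses indexed by its scope (using a common family of fitnesses on the union), then the probability that both walkers select the same position equals n_∩/n_∪. -/
open MeasureTheory ProbabilityTheory
open scoped ENNReal

/-!
Almost surely the maximum of the fitnesses over `N_L ∪ N_R` is attained at exactly one
position, and both walkers choose that position precisely when it lies in `N_L ∩ N_R`.
Since the joint law of i.i.d. fitnesses is invariant under permuting positions, each of the
`n_∪` positions is the maximiser with the same probability `1 / n_∪`.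
-/

namespace ProbabilityTheory

variable {Ω : Type*} [MeasurableSpace Ω] {μ : Measure Ω}

lemma IndepFun.measure_eq_eq_zero [IsFiniteMeasure μ] {X Y : Ω → ℝ} (hXY : IndepFun X Y μ)
    (hX : Measurable X) (hY : Measurable Y) (hY₀ : ∀ y, μ {ω | Y ω = y} = 0) :
    μ {ω | X ω = Y ω} = 0 := by
  have hdiag : MeasurableSet {p : ℝ × ℝ | p.1 = p.2} :=
    measurableSet_eq_fun measurable_fst measurable_snd
  calc μ {ω | X ω = Y ω} = (μ.map X).prod (μ.map Y) {p | p.1 = p.2} := by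
        rw [← (indepFun_iff_map_prod_eq_prod_map_map hX.aemeasurable hY.aemeasurable).1 hXY,
          Measure.map_apply (hX.prodMk hY) hdiag]
        rfl
    _ = ∫⁻ x, μ.map Y {x} ∂μ.map X := by
        rw [Measure.prod_apply hdiag]
        congr with x
        simp
    _ = 0 := by
        simp only [Measure.map_apply hY (measurableSet_singleton _)]
        exact (lintegral_congr fun y ↦ hY₀ y).trans lintegral_zero

lemma IdentDistrib.pi_of_iIndepFun [IsProbabilityMeasure μ] {κ : Type*} [Fintype κ]
    {β : κ → Type*} [∀ k, MeasurableSpace (β k)] {X Y : (k : κ) → Ω → β k}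
    (hX : iIndepFun X μ) (hY : iIndepFun Y μ) (hXY : ∀ k, IdentDistrib (X k) (Y k) μ μ) :
    IdentDistrib (fun ω k ↦ X k ω) (fun ω k ↦ Y k ω) μ μ where
  aemeasurable_fst := aemeasurable_pi_lambda _ fun k ↦ (hXY k).aemeasurable_fst
  aemeasurable_snd := aemeasurable_pi_lambda _ fun k ↦ (hXY k).aemeasurable_snd
  map_eq := by
    rw [(iIndepFun_iff_map_fun_eq_pi_map fun k ↦ (hXY k).aemeasurable_fst).1 hX,
      (iIndepFun_iff_map_fun_eq_pi_map fun k ↦ (hXY k).aemeasurable_snd).1 hY]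
    simp only [fun k ↦ (hXY k).map_eq]

end ProbabilityTheory

section MaxEvent

variable {Ω ι : Type*}

def maxEvent (F : ι → Ω → ℝ) (U : Finset ι) (i : ι) : Set Ω :=
  {ω | ∀ j ∈ U, F j ω ≤ F i ω}

lemma iUnion_maxEvent {U : Finset ι} (hU : U.Nonempty) (F : ι → Ω → ℝ) :
    ⋃ i ∈ U, maxEvent F U i = Set.univ :=
  Set.eq_univ_of_forall fun ω ↦
    let ⟨_, hi, hmax⟩ := U.exists_max_image (F · ω) hU
    Set.mem_biUnion hi hmax

variable [MeasurableSpace Ω] {μ : Measure Ω}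

lemma measurableSet_maxEvent {F : ι → Ω → ℝ} (hF : ∀ i, Measurable (F i)) (U : Finset ι)
    (i : ι) : MeasurableSet (maxEvent F U i) := by
  simp only [maxEvent, Set.ofPred_forall]
  exact .biInter U.countable_toSet fun j _ ↦ measurableSet_le (hF j) (hF i)

lemma measure_maxEvent_inter_maxEvent [IsFiniteMeasure μ] {F : ι → Ω → ℝ}
    (hF : ∀ i, Measurable (F i)) (hindep : iIndepFun F μ)
    (hatom : ∀ i (x : ℝ), μ {ω | F i ω = x} = 0) {U : Finset ι} {i j : ι} (hi : i ∈ U)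
    (hj : j ∈ U) (hij : i ≠ j) :
    μ (maxEvent F U i ∩ maxEvent F U j) = 0 :=
  measure_mono_null (fun _ ⟨hωi, hωj⟩ ↦ le_antisymm (hωj i hi) (hωi j hj))
    ((hindep.indepFun hij).measure_eq_eq_zero (hF i) (hF j) (hatom j))

lemma measure_biUnion_maxEvent_eq_sum [IsFiniteMeasure μ] {F : ι → Ω → ℝ}
    (hF : ∀ i, Measurable (F i)) (hindep : iIndepFun F μ)
    (hatom : ∀ i (x : ℝ), μ {ω | F i ω = x} = 0) {I U : Finset ι} (hIU : I ⊆ U) :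
    μ (⋃ i ∈ I, maxEvent F U i) = ∑ i ∈ I, μ (maxEvent F U i) :=
  measure_biUnion_finset₀
    (fun _ hi _ hj hij ↦ measure_maxEvent_inter_maxEvent hF hindep hatom (hIU hi) (hIU hj) hij)
    fun i _ ↦ (measurableSet_maxEvent hF U i).nullMeasurableSet

lemma measure_maxEvent_eq_of_iid [IsProbabilityMeasure μ] {F : ι → Ω → ℝ}
    (hindep : iIndepFun F μ) (hid : ∀ i j, IdentDistrib (F i) (F j) μ μ) {U : Finset ι}
    {i j : ι} (hi : i ∈ U) (hj : j ∈ U) :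
    μ (maxEvent F U i) = μ (maxEvent F U j) := by
  classical
  let σ : Equiv.Perm U := Equiv.swap ⟨i, hi⟩ ⟨j, hj⟩
  have hlaw : IdentDistrib (fun ω (k : U) ↦ F k ω) (fun ω k ↦ F (σ k) ω) μ μ :=
    .pi_of_iIndepFun (hindep.precomp Subtype.val_injective)
      (hindep.precomp (Subtype.val_injective.comp σ.injective)) fun k ↦ hid _ _
  let S : Set (U → ℝ) := {f | ∀ m, f m ≤ f ⟨i, hi⟩}
  have hS : MeasurableSet S := by
    simp only [S, Set.ofPred_forall]
    exact .iInter fun m ↦ measurableSet_le (measurable_pi_apply m) (measurable_pi_apply _)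
  have hSi : maxEvent F U i = (fun ω (k : U) ↦ F k ω) ⁻¹' S := by
    ext ω
    simp [maxEvent, S]
  have hSj : maxEvent F U j = (fun ω k ↦ F (σ k) ω) ⁻¹' S := by
    have hσi : σ ⟨i, hi⟩ = ⟨j, hj⟩ := Equiv.swap_apply_left _ _
    ext ω
    simp only [maxEvent, S, Set.mem_preimage, Set.mem_ofPred_eq, hσi]
    rw [σ.forall_congr_right (q := fun k : U ↦ F k ω ≤ F j ω), Subtype.forall]
  rw [hSi, hSj, hlaw.measure_mem_eq hS]

lemma measure_maxEvent [IsProbabilityMeasure μ] {F : ι → Ω → ℝ} (hF : ∀ i, Measurable (F i))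
    (hindep : iIndepFun F μ) (hid : ∀ i j, IdentDistrib (F i) (F j) μ μ)
    (hatom : ∀ i (x : ℝ), μ {ω | F i ω = x} = 0) {U : Finset ι} {i : ι} (hi : i ∈ U) :
    μ (maxEvent F U i) = (U.card : ℝ≥0∞)⁻¹ := by
  refine ENNReal.eq_inv_of_mul_eq_one_left ?_
  calc μ (maxEvent F U i) * U.card = ∑ j ∈ U, μ (maxEvent F U j) := by
        rw [Finset.sum_congr rfl fun j hj ↦ measure_maxEvent_eq_of_iid hindep hid hj hi,
          Finset.sum_const, nsmul_eq_mul, mul_comm]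
    _ = μ (⋃ j ∈ U, maxEvent F U j) :=
        (measure_biUnion_maxEvent_eq_sum hF hindep hatom subset_rfl).symm
    _ = 1 := by rw [iUnion_maxEvent ⟨i, hi⟩, measure_univ]

lemma measure_biUnion_maxEvent [IsProbabilityMeasure μ] {F : ι → Ω → ℝ}
    (hF : ∀ i, Measurable (F i)) (hindep : iIndepFun F μ)
    (hid : ∀ i j, IdentDistrib (F i) (F j) μ μ) (hatom : ∀ i (x : ℝ), μ {ω | F i ω = x} = 0)
    {I U : Finset ι} (hIU : I ⊆ U) :
    μ (⋃ i ∈ I, maxEvent F U i) = I.card / U.card := by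
  rw [measure_biUnion_maxEvent_eq_sum hF hindep hatom hIU,
    Finset.sum_congr rfl fun i hi ↦ measure_maxEvent hF hindep hid hatom (hIU hi),
    Finset.sum_const, nsmul_eq_mul, div_eq_mul_inv]

end MaxEvent

theorem coalescence_probability_general {Ω ι : Type*} [DecidableEq ι] [MeasureSpace Ω]
    [IsProbabilityMeasure (ℙ : Measure Ω)]
    (NL NR : Finset ι)
    (F : ι → Ω → ℝ)
    (hmeas : ∀ i, Measurable (F i))
    (hindep : iIndepFun F ℙ)
    (hid : ∀ i j, IdentDistrib (F i) (F j) ℙ ℙ)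
    (hatom : ∀ i (x : ℝ), (ℙ : Measure Ω) {ω | F i ω = x} = 0) :
    (ℙ : Measure Ω)
        {ω | ∃ i ∈ NL ∩ NR,
          (∀ j ∈ NL, F j ω ≤ F i ω) ∧ (∀ j ∈ NR, F j ω ≤ F i ω)}
      = ((NL ∩ NR).card : ℝ≥0∞) / ((NL ∪ NR).card : ℝ≥0∞) := by
  have hevent : {ω | ∃ i ∈ NL ∩ NR, (∀ j ∈ NL, F j ω ≤ F i ω) ∧ (∀ j ∈ NR, F j ω ≤ F i ω)}
      = ⋃ i ∈ NL ∩ NR, maxEvent F (NL ∪ NR) i := by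
    ext ω
    simp only [maxEvent, Set.mem_ofPred_eq, Set.mem_iUnion, exists_prop, Finset.forall_mem_union]
  rw [hevent, measure_biUnion_maxEvent hmeas hindep hid hatom Finset.inter_subset_union]

/-- Coalescence probability of two walkers: if both walkers jump to the argmax of a
common family of i.i.d. atomless fitnesses over their respective scopes, the probability
that they select the same position equals `n_∩ / n_∪`. -/
theorem coalescence_probability {Ω ι : Type*} [DecidableEq ι] [MeasureSpace Ω]
    [IsProbabilityMeasure (ℙ : Measure Ω)]
    (NL NR : Finset ι) (hcap : (NL ∩ NR).Nonempty)
    (F : ι → Ω → ℝ)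
    (hmeas : ∀ i, Measurable (F i))
    (hindep : iIndepFun F ℙ)
    (hid : ∀ i j, IdentDistrib (F i) (F j) ℙ ℙ)
    (hatom : ∀ i (x : ℝ), (ℙ : Measure Ω) {ω | F i ω = x} = 0) :
    (ℙ : Measure Ω)
        {ω | ∃ i ∈ NL ∩ NR,
          (∀ j ∈ NL, F j ω ≤ F i ω) ∧ (∀ j ∈ NR, F j ω ≤ F i ω)}
      = ((NL ∩ NR).card : ℝ≥0∞) / ((NL ∪ NR).card : ℝ≥0∞) :=
  coalescence_probability_general NL NR F hmeas hindep hid hatom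
end
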